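/- arXiv:2206.10806 — 2 statements merged into one kernel-verified Lean document; each statement's English description precedes it below -/
import Mathlib

section
/- Let p be a prime with 3 | (p − 1) and ω ∈ F_p a primitive third root of unity. Let C be the cyclic code of length 3p over F_p with generator polynomial g(x) = (x−1)^4 (x−ω)^2 (x−ω^2). Then C has dimension 3p − 7 and minimum Hamming distance 5. -/
open Polynomial

/-- Hamming weight of a cyclic word `x : ZMod n → F`. -/
def hammingWt {F : Type*} [Zero F] [DecidableEq F] (n : ℕ) (x : ZMod n → F) : ℕ :=
  ((Finset.range n).filter fun i : ℕ => x (↑i) ≠ 0).card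

/-- Symbol-pair weight of a cyclic word `x : ZMod n → F`. -/
def pairWt {F : Type*} [Zero F] [DecidableEq F] (n : ℕ) (x : ZMod n → F) : ℕ :=
  ((Finset.range n).filter fun i : ℕ =>
    (x (↑i), x (↑i + 1)) ≠ ((0 : F), (0 : F))).card

/-- Symbol-pair distance between two words of length `n`. -/
def pairDist {F : Type*} [DecidableEq F] (n : ℕ) (x y : ZMod n → F) : ℕ :=
  ((Finset.range n).filter fun i : ℕ =>
    (x (↑i), x (↑i + 1)) ≠ (y (↑i), y (↑i + 1))).card

/-- The polynomial associated to a word. -/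
noncomputable def toPoly {F : Type*} [Semiring F] (n : ℕ) (x : ZMod n → F) : F[X] :=
  ∑ i ∈ Finset.range n, Polynomial.C (x (↑i)) * X ^ i

/-- The cyclic code of length `n` with generator polynomial `g`:
a word of length `n` is a codeword iff its associated polynomial
(of degree `< n`) is divisible by `g`. -/
def cyclicCode {F : Type*} [Field F] (n : ℕ) (g : F[X]) : Set (ZMod n → F) :=
  {c | g ∣ toPoly n c}

/-!
Applying `(X * d/dX)^k` to a codeword `c` and evaluating at a root `a` of multiplicity `> k`
gives the moment identities `∑ cᵢ iᵏ aⁱ = 0`. Split the support of `c` by residues mod 3 and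
suppose it meets `ρ` classes. As `ωⁱ = ωʳ` for `i ≡ r`, the identities at `a = 1, …, ω^(ρ-1)`
form a Vandermonde system in `1, ω, ω²`, so `∑_{i ≡ r} cᵢ iᵏ = 0` on every class met, for every
`k < d` with `(X - ω^j)^d ∣ g` for all `j < ρ`. Inside a class the indices `i < 3p` are distinct
mod `p` (CRT), so a second Vandermonde argument shows each class has more than `d` elements.
Hence the weight is at least `ρ (d + 1)`, which is `≥ 5` for `(ρ, d) = (1, 4), (2, 2), (3, 1)`.
The word of `(X³ - 1)⁴ = X¹² - 4X⁹ + 6X⁶ - 4X³ + 1` has weight exactly 5.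
-/

open Finset

variable {F : Type*} [Field F]

section CyclicCode

variable {n : ℕ}

noncomputable def ofPoly (n : ℕ) (P : F[X]) : ZMod n → F := fun j => P.coeff j.val

lemma coeff_toPoly (c : ZMod n → F) (k : ℕ) :
    (toPoly n c).coeff k = if k < n then c k else 0 := by
  simp only [toPoly, finsetSum_coeff, coeff_C_mul, coeff_X_pow, mul_ite, mul_one, mul_zero,
    sum_ite_eq, mem_range]

lemma degree_toPoly_lt (c : ZMod n → F) : (toPoly n c).degree < n := by
  rw [degree_lt_iff_coeff_zero]
  intro k hk
  simp [coeff_toPoly, Nat.not_lt.2 hk]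

lemma toPoly_ofPoly {P : F[X]} (hP : P.degree < n) : toPoly n (ofPoly n P) = P := by
  ext k
  rw [coeff_toPoly]
  split_ifs with hk
  · rw [ofPoly, ZMod.val_cast_of_lt hk]
  · exact (coeff_eq_zero_of_degree_lt (hP.trans_le (by exact_mod_cast Nat.not_lt.1 hk))).symm

lemma ofPoly_toPoly [NeZero n] (c : ZMod n → F) : ofPoly n (toPoly n c) = c := by
  ext j
  rw [ofPoly, coeff_toPoly, if_pos (ZMod.val_lt j), ZMod.natCast_zmod_val]

lemma Polynomial.Monic.degree_mul_lt_iff {g q : F[X]} (hg : g.Monic) (hgn : g.natDegree ≤ n) :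
    (g * q).degree < n ↔ q.degree < ↑(n - g.natDegree) := by
  rcases eq_or_ne q 0 with rfl | hq
  · simp
  rw [← natDegree_lt_iff_degree_lt (hg.mul_right_ne_zero hq), ← natDegree_lt_iff_degree_lt hq,
    hg.natDegree_mul' hq]
  omega

noncomputable def cyclicCodeEquiv [NeZero n] {g : F[X]} (hg : g.Monic) (hgn : g.natDegree ≤ n) :
    degreeLT F (n - g.natDegree) ≃ cyclicCode n g where
  toFun q := ⟨ofPoly n (g * q), by
    have hq := (hg.degree_mul_lt_iff hgn).2 (mem_degreeLT.1 q.2)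
    simp only [cyclicCode, Set.mem_ofPred_eq, toPoly_ofPoly hq, dvd_mul_right]⟩
  invFun c := ⟨toPoly n c.1 /ₘ g, by
    obtain ⟨q, hq⟩ : g ∣ toPoly n c.1 := c.2
    have hc : g * (toPoly n c.1 /ₘ g) = toPoly n c.1 := by rw [hq, mul_divByMonic_cancel_left _ hg]
    exact mem_degreeLT.2 ((hg.degree_mul_lt_iff hgn).1 (by rw [hc]; exact degree_toPoly_lt c.1))⟩
  left_inv q := by
    ext1
    simp only [toPoly_ofPoly ((hg.degree_mul_lt_iff hgn).2 (mem_degreeLT.1 q.2)),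
      mul_divByMonic_cancel_left _ hg]
  right_inv c := by
    obtain ⟨q, hq⟩ : g ∣ toPoly n c.1 := c.2
    ext1
    change ofPoly n (g * (toPoly n c.1 /ₘ g)) = c
    rw [hq, mul_divByMonic_cancel_left _ hg, ← hq, ofPoly_toPoly]

theorem card_cyclicCode [NeZero n] [Finite F] {g : F[X]} (hg : g.Monic) (hgn : g.natDegree ≤ n) :
    Nat.card (cyclicCode n g) = Nat.card F ^ (n - g.natDegree) := by
  rw [← Nat.card_congr (cyclicCodeEquiv hg hgn),
    Nat.card_congr (degreeLTEquiv F (n - g.natDegree)).toEquiv, Nat.card_fun, Nat.card_fin]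

end CyclicCode

lemma X_mul_derivative_C_mul_X_pow (a : F) (i : ℕ) :
    X * derivative (C a * X ^ i) = C (a * i) * X ^ i := by
  rcases i with _ | i
  · simp
  · rw [derivative_C_mul_X_pow, Nat.add_sub_cancel, mul_left_comm, ← pow_succ']

lemma iterate_X_mul_derivative_toPoly {n : ℕ} (c : ZMod n → F) (k : ℕ) :
    (fun P => X * derivative P)^[k] (toPoly n c) =
      ∑ i ∈ range n, C (c i * (i : F) ^ k) * X ^ i := by
  induction k with
  | zero => simp [toPoly]
  | succ k ih =>
    rw [Function.iterate_succ_apply', ih, derivative_sum, mul_sum]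
    simp only [X_mul_derivative_C_mul_X_pow, pow_succ, mul_assoc]

lemma pow_sub_dvd_iterate_X_mul_derivative {P Q : F[X]} {m : ℕ} (h : Q ^ m ∣ P) (k : ℕ) :
    Q ^ (m - k) ∣ (fun P => X * derivative P)^[k] P := by
  induction k with
  | zero => simpa
  | succ k ih =>
    rw [Nat.sub_succ, Function.iterate_succ_apply']
    exact (pow_sub_one_dvd_derivative_of_pow_dvd ih).mul_left X

section WordSupport

variable [DecidableEq F] {n : ℕ}

def wordSupport (c : ZMod n → F) : Finset ℕ := {i ∈ range n | c i ≠ 0}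

lemma hammingWt_eq_card_wordSupport (c : ZMod n → F) :
    hammingWt n c = #(wordSupport c) := rfl

lemma wordSupport_nonempty [NeZero n] {c : ZMod n → F} (hc : c ≠ 0) :
    (wordSupport c).Nonempty := by
  obtain ⟨j, hj⟩ := Function.ne_iff.1 hc
  exact ⟨j.val, mem_filter.2 ⟨mem_range.2 j.val_lt, by rwa [ZMod.natCast_zmod_val]⟩⟩

lemma wordSupport_ofPoly {P : F[X]} (hP : P.degree < n) :
    wordSupport (ofPoly n P) = P.support := by
  ext i
  simp only [wordSupport, mem_filter, mem_range, mem_support_iff]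
  simp only [ofPoly]
  constructor
  · rintro ⟨hi, h⟩
    rwa [ZMod.val_cast_of_lt hi] at h
  · intro h
    have hi : i < n := by
      by_contra hi
      exact h (coeff_eq_zero_of_degree_lt (hP.trans_le (by exact_mod_cast not_lt.1 hi)))
    exact ⟨hi, by rwa [ZMod.val_cast_of_lt hi]⟩

lemma sum_wordSupport_mul_pow_eq_zero {m k : ℕ} {c : ZMod n → F} {a : F}
    (h : (X - C a) ^ m ∣ toPoly n c) (hk : k < m) :
    ∑ i ∈ wordSupport c, c i * (i : F) ^ k * a ^ i = 0 := by
  have hroot : X - C a ∣ (fun P => X * derivative P)^[k] (toPoly n c) :=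
    (dvd_pow_self _ (Nat.sub_ne_zero_of_lt hk)).trans (pow_sub_dvd_iterate_X_mul_derivative h k)
  rw [dvd_iff_isRoot, IsRoot, iterate_X_mul_derivative_toPoly] at hroot
  rw [wordSupport, sum_filter_of_ne fun i _ hi => left_ne_zero_of_mul (left_ne_zero_of_mul hi)]
  simpa [eval_finsetSum] using hroot

end WordSupport

lemma eq_zero_of_forall_sum_mul_pow_eq_zero {ι : Type*} {S : Finset ι} {e f : ι → F}
    (he : Set.InjOn e S) (h : ∀ k < #S, ∑ i ∈ S, f i * e i ^ k = 0) : ∀ i ∈ S, f i = 0 := by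
  set σ := S.equivFin.symm
  have hsum (g : ι → F) : ∑ a, g (σ a) = ∑ i ∈ S, g i := by
    rw [Equiv.sum_comp σ (fun x : S => g x), sum_coe_sort]
  have hv := Matrix.eq_zero_of_forall_pow_sum_mul_pow_eq_zero (f := fun a => e (σ a))
    (v := fun a => f (σ a)) (fun a b hab => σ.injective (Subtype.ext (he (σ a).2 (σ b).2 hab)))
    (fun k => by rw [hsum fun i => f i * e i ^ (k : ℕ)]; exact h k k.2)
  intro i hi
  simpa using congrFun hv (σ.symm ⟨i, hi⟩)

lemma sum_filter_mod_eq_zero {ζ : F} {n : ℕ} (hζ : IsPrimitiveRoot ζ n) (hn : 0 < n)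
    {S : Finset ℕ} {g : ℕ → F} (h : ∀ j < #(S.image (· % n)), ∑ i ∈ S, g i * (ζ ^ j) ^ i = 0) :
    ∀ r ∈ S.image (· % n), ∑ i ∈ S with i % n = r, g i = 0 := by
  refine eq_zero_of_forall_sum_mul_pow_eq_zero (e := (ζ ^ ·)) ?_ fun j hj => ?_
  · intro r hr r' hr' h
    simp only [coe_image, Set.mem_image, mem_coe] at hr hr'
    obtain ⟨i, -, rfl⟩ := hr
    obtain ⟨i', -, rfl⟩ := hr'
    exact hζ.pow_inj (Nat.mod_lt _ hn) (Nat.mod_lt _ hn) h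
  · rw [← h j hj, ← sum_fiberwise_of_maps_to (s := S) (fun i hi => mem_image_of_mem (· % n) hi)]
    refine sum_congr rfl fun r _ => ?_
    rw [sum_mul]
    refine sum_congr rfl fun i hi => ?_
    rw [(mem_filter.1 hi).2.symm, ← pow_mul, ← pow_mul, mul_comm j, pow_mul, pow_mul,
      ← pow_eq_pow_mod _ hζ.pow_eq_one]

lemma injOn_natCast_filter_mod_eq {p n r : ℕ} [CharP F p] (hnp : n.Coprime p) :
    Set.InjOn (Nat.cast : ℕ → F) ↑({i ∈ range (n * p) | i % n = r}) := by
  intro i hi j hj hij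
  simp only [coe_filter, mem_range, Set.mem_ofPred_eq] at hi hj
  obtain ⟨hi, hir⟩ := hi
  obtain ⟨hj, hjr⟩ := hj
  have hmod : i ≡ j [MOD n * p] := (Nat.modEq_and_modEq_iff_modEq_mul hnp).1
    ⟨hir.trans hjr.symm, (CharP.natCast_eq_natCast F p).1 hij⟩
  exact hmod.eq_of_lt_of_lt hi hj

theorem mul_succ_le_hammingWt [DecidableEq F] {p n d : ℕ} [CharP F p] (hnp : n.Coprime p)
    (hn : 0 < n) {ζ : F} (hζ : IsPrimitiveRoot ζ n) {c : ZMod (n * p) → F}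
    (hdvd : ∀ j < #((wordSupport c).image (· % n)), (X - C (ζ ^ j)) ^ d ∣ toPoly (n * p) c) :
    #((wordSupport c).image (· % n)) * (d + 1) ≤ hammingWt (n * p) c := by
  rw [hammingWt_eq_card_wordSupport]
  by_contra! hlt
  obtain ⟨r, hr, hcard⟩ := exists_card_fiber_lt_of_card_lt_mul (f := (· % n)) hlt
  have hmom (k : ℕ) (hk : k < d) : ∑ i ∈ wordSupport c with i % n = r, c i * (i : F) ^ k = 0 :=
    sum_filter_mod_eq_zero hζ hn (fun j hj => sum_wordSupport_mul_pow_eq_zero (hdvd j hj) hk) r hr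
  have hinj : Set.InjOn (Nat.cast : ℕ → F) ↑({i ∈ wordSupport c | i % n = r}) :=
    (injOn_natCast_filter_mod_eq hnp).mono
      (coe_subset.2 (filter_subset_filter _ (filter_subset _ _)))
  have hzero := eq_zero_of_forall_sum_mul_pow_eq_zero (S := {i ∈ wordSupport c | i % n = r})
    (f := fun i => c i) hinj fun k hk => hmom k (by omega)
  obtain ⟨i, hi, rfl⟩ := mem_image.1 hr
  exact (mem_filter.1 hi).2 (hzero i (mem_filter.2 ⟨hi, rfl⟩))

lemma support_X_pow_three_sub_one_pow_four (h2 : (2 : F) ≠ 0) (h3 : (3 : F) ≠ 0) :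
    ((X ^ 3 - 1 : F[X]) ^ 4).support = {0, 3, 6, 9, 12} := by
  have h4 : (4 : F) ≠ 0 := by rw [show (4 : F) = 2 * 2 by norm_num]; exact mul_ne_zero h2 h2
  have h6 : (6 : F) ≠ 0 := by rw [show (6 : F) = 2 * 3 by norm_num]; exact mul_ne_zero h2 h3
  have hexp : (X ^ 3 - 1 : F[X]) ^ 4 = X ^ 12 - C 4 * X ^ 9 + C 6 * X ^ 6 - C 4 * X ^ 3 + 1 := by
    simp only [map_ofNat]
    ring
  ext i
  rw [hexp, mem_support_iff]
  simp only [coeff_add, coeff_sub, coeff_C_mul, coeff_X_pow, coeff_one]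
  split_ifs <;> simp_all

section CubeRoots

variable {ω : F}

lemma X_sub_one_mul_X_sub_C_mul_X_sub_C_sq (hω : IsPrimitiveRoot ω 3) :
    (X - 1) * (X - C ω) * (X - C (ω ^ 2)) = (X ^ 3 - 1 : F[X]) := by
  have hsum : 1 + ω + ω ^ 2 = 0 := by
    simpa [sum_range_succ] using hω.geom_sum_eq_zero (by norm_num)
  have hcube : C ω ^ 3 = (1 : F[X]) := by rw [← map_pow, hω.pow_eq_one, map_one]
  have hsumC : 1 + C ω + C ω ^ 2 = (0 : F[X]) := by simpa using congrArg C hsum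
  rw [map_pow]
  linear_combination (X - X ^ 2) * hsumC + (X - 1) * hcube

theorem five_le_hammingWt [DecidableEq F] {p : ℕ} [CharP F p] (hp : Nat.Coprime 3 p)
    (hω : IsPrimitiveRoot ω 3) {c : ZMod (3 * p) → F}
    (hc : (X - 1) ^ 4 * (X - C ω) ^ 2 * (X - C (ω ^ 2)) ∣ toPoly (3 * p) c) (hc0 : c ≠ 0) :
    5 ≤ hammingWt (3 * p) c := by
  have : NeZero p := ⟨by rintro rfl; norm_num at hp⟩
  have hle : #((wordSupport c).image (· % 3)) ≤ 3 :=
    (card_le_card (image_subset_iff.2 fun i _ => mem_range.2 (Nat.mod_lt i three_pos))).trans_eq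
      (card_range 3)
  have hpos : 0 < #((wordSupport c).image (· % 3)) :=
    card_pos.2 ((wordSupport_nonempty hc0).image _)
  have key (d : ℕ) := mul_succ_le_hammingWt (d := d) hp (by norm_num) hω (c := c)
  -- `ρ` residue classes are met, and `(X - ω ^ j) ^ d ∣ g` for `j < ρ` with `d = 4, 2, 1`.
  generalize #((wordSupport c).image (· % 3)) = ρ at hle hpos key
  interval_cases ρ
  · have := key 4 fun j hj => by
      obtain rfl : j = 0 := Nat.lt_one_iff.1 hj
      refine dvd_trans ?_ hc
      simp only [pow_zero, map_one]
      exact dvd_mul_of_dvd_left (dvd_mul_right _ _) _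
    omega
  · have := key 2 fun j hj => by
      refine dvd_trans ?_ hc
      obtain rfl | rfl : j = 0 ∨ j = 1 := by omega
      · simp only [pow_zero, map_one]
        exact dvd_mul_of_dvd_left (dvd_mul_of_dvd_left (pow_dvd_pow _ (by norm_num)) _) _
      · simp only [pow_one]
        exact dvd_mul_of_dvd_left (dvd_mul_left _ _) _
    omega
  · have := key 1 fun j hj => by
      refine dvd_trans ?_ hc
      obtain rfl | rfl | rfl : j = 0 ∨ j = 1 ∨ j = 2 := by omega
      · simp only [pow_zero, pow_one, map_one]
        exact dvd_mul_of_dvd_left (dvd_mul_of_dvd_left (dvd_pow_self _ (by norm_num)) _) _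
      · simp only [pow_one]
        exact dvd_mul_of_dvd_left (dvd_mul_of_dvd_right (dvd_pow_self _ (by norm_num)) _) _
      · simp only [pow_one]
        exact dvd_mul_left _ _
    omega

theorem exists_hammingWt_eq_five [DecidableEq F] {n : ℕ} (hn : 12 < n) (h2 : (2 : F) ≠ 0)
    (h3 : (3 : F) ≠ 0) (hω : IsPrimitiveRoot ω 3) :
    ∃ c ∈ cyclicCode n ((X - 1) ^ 4 * (X - C ω) ^ 2 * (X - C (ω ^ 2))),
      c ≠ 0 ∧ hammingWt n c = 5 := by
  have hP : ((X ^ 3 - 1 : F[X]) ^ 4).degree < n := by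
    have : ((X ^ 3 - 1 : F[X]) ^ 4).degree ≤ 12 := by compute_degree
    exact this.trans_lt (by exact_mod_cast hn)
  have hwt : hammingWt n (ofPoly n ((X ^ 3 - 1 : F[X]) ^ 4)) = 5 := by
    rw [hammingWt_eq_card_wordSupport, wordSupport_ofPoly hP,
      support_X_pow_three_sub_one_pow_four h2 h3]
    rfl
  refine ⟨_, ?_, fun h0 => by simp [h0, hammingWt] at hwt, hwt⟩
  change _ ∣ toPoly n (ofPoly n ((X ^ 3 - 1 : F[X]) ^ 4))
  rw [toPoly_ofPoly hP, ← X_sub_one_mul_X_sub_C_mul_X_sub_C_sq hω]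
  exact ⟨(X - C ω) ^ 2 * (X - C (ω ^ 2)) ^ 3, by ring⟩

end CubeRoots

theorem stmt_13 (p : ℕ) [hp : Fact p.Prime] (hdvd : 3 ∣ p - 1)
    (ω : ZMod p) (hω : IsPrimitiveRoot ω 3) :
    Nat.card (cyclicCode (3 * p)
        ((X - 1) ^ 4 * (X - Polynomial.C ω) ^ 2 * (X - Polynomial.C (ω ^ 2)) : (ZMod p)[X]))
      = p ^ (3 * p - 7) ∧
    (∃ c ∈ cyclicCode (3 * p)
        ((X - 1) ^ 4 * (X - Polynomial.C ω) ^ 2 * (X - Polynomial.C (ω ^ 2)) : (ZMod p)[X]),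
      c ≠ 0 ∧ hammingWt (3 * p) c = 5) ∧
    (∀ c ∈ cyclicCode (3 * p)
        ((X - 1) ^ 4 * (X - Polynomial.C ω) ^ 2 * (X - Polynomial.C (ω ^ 2)) : (ZMod p)[X]),
      c ≠ 0 → 5 ≤ hammingWt (3 * p) c) := by
  have hp5 : 5 ≤ p := hp.out.five_le_of_ne_two_of_ne_three (by omega) (by omega)
  have : NeZero (3 * p) := ⟨by omega⟩
  have hcast (k : ℕ) (hk0 : 0 < k) (hkp : k < p) : (k : ZMod p) ≠ 0 := by
    rw [Ne, ZMod.natCast_eq_zero_iff]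
    exact Nat.not_dvd_of_pos_of_lt hk0 hkp
  have hdeg : ((X - 1) ^ 4 * (X - C ω) ^ 2 * (X - C (ω ^ 2)) : (ZMod p)[X]).natDegree = 7 := by
    compute_degree!
  refine ⟨?_, exists_hammingWt_eq_five (by omega) (by exact_mod_cast hcast 2 two_pos (by omega))
    (by exact_mod_cast hcast 3 three_pos (by omega)) hω, fun c hc hc0 =>
    five_le_hammingWt ((Nat.coprime_primes (by norm_num) hp.out).2 (by omega)) hω hc hc0⟩
  rw [card_cyclicCode (by monicity!) (by omega), hdeg, Nat.card_zmod]
end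

section
/- Let C be a linear [n, k, d_H] code over F_q with 2 ≤ d_H < n. If C is not MDS (i.e., k < n − d_H + 1) and C is constacyclic (closed under the η-constacyclic shift for some η ∈ F_q^*), then the minimum symbol-pair distance of C satisfies d_p(C) ≥ d_H + 2. -/
open Polynomial

section aux
variable {n : ℕ}

lemma castInj (hn : 0 < n) {a b : ℕ} (ha : a < n) (hb : b < n)
    (h : (a : ZMod n) = b) : a = b := by
  haveI : NeZero n := ⟨hn.ne'⟩
  rw [← ZMod.val_cast_of_lt ha, ← ZMod.val_cast_of_lt hb, h]

lemma card_filter_cast [NeZero n] (P : ZMod n → Prop) [DecidablePred P] :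
    ((Finset.range n).filter fun i : ℕ => P ↑i).card = (Finset.univ.filter P).card := by
  have hn : 0 < n := Nat.pos_of_ne_zero (NeZero.ne n)
  refine Finset.card_bij (fun i _ => (i : ZMod n)) ?_ ?_ ?_
  · intro a ha
    simp only [Finset.mem_filter, Finset.mem_range] at ha ⊢
    exact ⟨Finset.mem_univ _, ha.2⟩
  · intro a ha b hb h
    simp only [Finset.mem_filter, Finset.mem_range] at ha hb
    exact castInj hn ha.1 hb.1 h
  · intro z hz
    simp only [Finset.mem_filter] at hz
    refine ⟨z.val, ?_, ZMod.natCast_rightInverse z⟩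
    simp only [Finset.mem_filter, Finset.mem_range]
    exact ⟨ZMod.val_lt z, by rw [ZMod.natCast_rightInverse z]; exact hz.2⟩

lemma downclosed_eq_range {m : ℕ} (J : Finset ℕ) (hJ : ∀ t, t + 1 ∈ J → t ∈ J)
    (hcard : J.card = m) : J = Finset.range m := by
  have step : ∀ d i, i + d ∈ J → i ∈ J := by
    intro d
    induction d with
    | zero => exact fun i h => h
    | succ d ih => exact fun i h => ih i (hJ _ h)
  ext j
  simp only [Finset.mem_range]
  constructor
  · intro hj
    have hsub : Finset.range (j + 1) ⊆ J := by
      intro i hi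
      rw [Finset.mem_range] at hi
      exact step (j - i) i (by rwa [Nat.add_sub_cancel' (Nat.lt_succ_iff.mp hi)])
    have := Finset.card_le_card hsub
    rw [Finset.card_range, hcard] at this
    omega
  · intro hj
    by_contra hnj
    have hsub : J ⊆ Finset.range j := by
      intro i hi
      rw [Finset.mem_range]
      by_contra hij
      exact hnj (step (i - j) j (by rwa [Nat.add_sub_cancel' (Nat.le_of_not_lt hij)]))
    have := Finset.card_le_card hsub
    rw [Finset.card_range, hcard] at this
    omega

end aux

noncomputable section shiftsec
variable {F : Type*} [Field F]

def shiftF (n : ℕ) (η : F) (x : ZMod n → F) : ZMod n → F :=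
  fun i => (if i = 0 then η else 1) * x (i - 1)

lemma shiftF_iter_mem {n : ℕ} {η : F} (C : Submodule F (ZMod n → F))
    (hshift : ∀ c ∈ C, (fun i : ZMod n => (if i = 0 then η else 1) * c (i - 1)) ∈ C)
    {x : ZMod n → F} (hx : x ∈ C) (k : ℕ) : (shiftF n η)^[k] x ∈ C := by
  induction k with
  | zero => exact hx
  | succ k ih =>
    rw [Function.iterate_succ_apply']
    exact hshift _ ih

lemma shiftF_ne_zero_iff {n : ℕ} {η : F} (hη : η ≠ 0) (x : ZMod n → F) (i : ZMod n) :
    shiftF n η x i ≠ 0 ↔ x (i - 1) ≠ 0 := by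
  unfold shiftF
  split <;> simp [hη]

lemma shiftF_iter_ne_zero_iff {n : ℕ} {η : F} (hη : η ≠ 0) (x : ZMod n → F) (k : ℕ)
    (i : ZMod n) : (shiftF n η)^[k] x i ≠ 0 ↔ x (i - (k : ZMod n)) ≠ 0 := by
  induction k generalizing i with
  | zero => simp
  | succ k ih =>
    rw [Function.iterate_succ_apply', shiftF_ne_zero_iff hη, ih]
    have : i - 1 - (k : ZMod n) = i - ((k : ℕ) + 1 : ℕ) := by
      push_cast
      ring
    rw [this]

end shiftsec

section rank
variable {F V : Type*} [Field F] [AddCommGroup V] [Module F V]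

lemma le_finrank_of_li [Module.Finite F V] {m : ℕ} (C : Submodule F V)
    (v : Fin m → V) (hv : ∀ i, v i ∈ C) (h : LinearIndependent F v) :
    m ≤ Module.finrank F C := by
  have h1 := finrank_span_eq_card h
  have hle : Submodule.span F (Set.range v) ≤ C :=
    Submodule.span_le.mpr (by rintro _ ⟨i, rfl⟩; exact hv i)
  have h2 := Submodule.finrank_mono (t := C) hle
  simp only [Fintype.card_fin] at h1
  omega

lemma finrank_ge_of_triangular {n : ℕ} [Module.Finite F (ZMod n → F)]
    (C : Submodule F (ZMod n → F)) {m : ℕ}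
    (v : ℕ → ZMod n → F) (p : ℕ → ZMod n)
    (hmem : ∀ i, i < m → v i ∈ C)
    (hdiag : ∀ i, i < m → v i (p i) ≠ 0)
    (hzero : ∀ i j, i < j → j < m → v i (p j) = 0) :
    m ≤ Module.finrank F C := by
  apply le_finrank_of_li C (fun i : Fin m => v i.val) (fun i => hmem i.val i.2)
  rw [linearIndependent_iff']
  intro s g hsum
  have key : ∀ k (i : Fin m), i ∈ s → m - i.val ≤ k → g i = 0 := by
    intro k
    induction k with
    | zero => intro i _ hk; exact absurd hk (by omega)
    | succ k ih =>
      intro i hi hk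
      have heval := congrFun hsum (p i.val)
      rw [Finset.sum_apply] at heval
      have hsingle : ∑ j ∈ s, (g j • v j.val) (p i.val) = g i * v i.val (p i.val) := by
        apply Finset.sum_eq_single_of_mem i hi
        intro j hj hji
        rcases lt_or_gt_of_ne (fun h : j.val = i.val => hji (Fin.ext h)) with h | h
        · simp [hzero j.val i.val h i.2]
        · have : g j = 0 := ih j hj (by omega)
          simp [this]
      rw [hsingle] at heval
      rcases mul_eq_zero.mp heval with h | h
      · exact h
      · exact absurd h (hdiag i.val i.2)
  intro i hi
  exact key m i hi (by omega)

end rank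

section dimge
variable {F : Type*} [Field F]

lemma dim_ge {n : ℕ} [NeZero n] {η : F} (hη : η ≠ 0)
    (C : Submodule F (ZMod n → F))
    (hshift : ∀ c ∈ C, (fun i : ZMod n => (if i = 0 then η else 1) * c (i - 1)) ∈ C)
    {dH : ℕ} (hdH : 0 < dH) (hdHn : dH < n)
    (c : ZMod n → F) (hc : c ∈ C) (b : ZMod n)
    (hsupp : ∀ z, c z ≠ 0 ↔ ∃ t, t < dH ∧ z = b + (t : ZMod n)) :
    n - dH + 1 ≤ Module.finrank F C := by
  have hn : 0 < n := Nat.pos_of_ne_zero (NeZero.ne n)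
  set c₀ := (shiftF n η)^[n - b.val] c with hc₀
  have hbval : (((n - b.val : ℕ) : ZMod n)) = -b := by
    rw [Nat.cast_sub (le_of_lt (ZMod.val_lt b))]
    simp [ZMod.natCast_rightInverse b]
  have hc₀supp : ∀ z, c₀ z ≠ 0 ↔ ∃ t, t < dH ∧ z = (t : ZMod n) := by
    intro z
    rw [hc₀, shiftF_iter_ne_zero_iff hη, hsupp, hbval]
    constructor
    · rintro ⟨t, ht, hz⟩
      exact ⟨t, ht, by rw [sub_eq_iff_eq_add] at hz; rw [hz]; ring⟩
    · rintro ⟨t, ht, hz⟩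
      exact ⟨t, ht, by rw [hz]; ring⟩
  set v : ℕ → ZMod n → F := fun i => (shiftF n η)^[i] c₀ with hv
  have hvsupp : ∀ i z, v i z ≠ 0 ↔ ∃ t, t < dH ∧ z = ((i + t : ℕ) : ZMod n) := by
    intro i z
    rw [hv]
    simp only
    rw [shiftF_iter_ne_zero_iff hη, hc₀supp]
    constructor
    · rintro ⟨t, ht, hz⟩
      refine ⟨t, ht, ?_⟩
      rw [sub_eq_iff_eq_add] at hz
      rw [hz]; push_cast; ring
    · rintro ⟨t, ht, hz⟩
      refine ⟨t, ht, ?_⟩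
      rw [hz]; push_cast; ring
  apply finrank_ge_of_triangular C v (fun i => ((i + (dH - 1) : ℕ) : ZMod n))
  · intro i _
    rw [hv]
    simp only
    rw [← Function.iterate_add_apply]
    exact shiftF_iter_mem C hshift hc _
  · intro i _
    rw [hvsupp]
    exact ⟨dH - 1, by omega, rfl⟩
  · intro i j hij hjm
    by_contra h
    rcases (hvsupp i _).mp h with ⟨t, ht, heq⟩
    have h1 : j + (dH - 1) < n := by omega
    have h2 : i + t < n := by omega
    have := castInj hn h1 h2 heq
    omega
end dimge

theorem stmt_17 {F : Type*} [Field F] [Fintype F] [DecidableEq F] (n : ℕ)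
    (η : F) (hη : η ≠ 0) (C : Submodule F (ZMod n → F))
    (hshift : ∀ c ∈ C, (fun i : ZMod n => (if i = 0 then η else 1) * c (i - 1)) ∈ C)
    (dH : ℕ) (hdH2 : 2 ≤ dH) (hdHn : dH < n)
    (hex : ∃ c ∈ C, c ≠ 0 ∧ hammingWt n c = dH)
    (hmin : ∀ c ∈ C, c ≠ 0 → dH ≤ hammingWt n c)
    (hnotMDS : Module.finrank F C < n - dH + 1) :
    ∀ c ∈ C, c ≠ 0 → dH + 2 ≤ pairWt n c := by
  intro c hcC hc0
  by_contra hlt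
  push_neg at hlt
  have hn : 0 < n := lt_of_le_of_lt (Nat.zero_le _) hdHn
  haveI : NeZero n := ⟨hn.ne'⟩
  set S := Finset.univ.filter (fun z : ZMod n => c z ≠ 0) with hS
  set T := Finset.univ.filter (fun z : ZMod n => (c z, c (z + 1)) ≠ ((0:F), 0)) with hT
  have hSdef : ∀ z : ZMod n, z ∈ S ↔ c z ≠ 0 := by intro z; simp [hS]
  have hTdef : ∀ z : ZMod n, z ∈ T ↔ (c z ≠ 0 ∨ c (z + 1) ≠ 0) := by
    intro z; simp only [hT, Finset.mem_filter, Finset.mem_univ, true_and, ne_eq,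
      Prod.mk.injEq, not_and_or]
  have hwS : hammingWt n c = S.card := by
    rw [hS]; unfold hammingWt; exact card_filter_cast (fun z : ZMod n => c z ≠ 0)
  have hwT : pairWt n c = T.card := by
    rw [hT]; unfold pairWt; exact card_filter_cast (fun z : ZMod n => (c z, c (z + 1)) ≠ ((0:F), 0))
  have hScard : dH ≤ S.card := hwS ▸ hmin c hcC hc0
  have hST : S ⊆ T := fun z hz => (hTdef z).mpr (Or.inl ((hSdef z).mp hz))
  have hSTcard : S.card ≤ T.card := Finset.card_le_card hST
  have hTcard : T.card ≤ dH + 1 := by omega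
  by_cases hSu : S = Finset.univ
  · -- full-support case: forces n = dH + 1
    have hcardS : S.card = n := by rw [hSu, Finset.card_univ, ZMod.card]
    have hndH : n = dH + 1 := by omega
    obtain ⟨c', hc'C, hc'0, hwt⟩ := hex
    have hz₀ : ∃ z₀, c' z₀ = 0 := by
      by_contra hall
      push_neg at hall
      have h1 : hammingWt n c' = (Finset.univ.filter fun z : ZMod n => c' z ≠ 0).card := by
        unfold hammingWt; exact card_filter_cast (fun z : ZMod n => c' z ≠ 0)
      rw [Finset.filter_true_of_mem (fun z _ => hall z), Finset.card_univ, ZMod.card] at h1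
      omega
    obtain ⟨z₀, hz₀⟩ := hz₀
    have hcz₀ : c z₀ ≠ 0 := (hSdef z₀).mp (hSu ▸ Finset.mem_univ z₀)
    have hli : LinearIndependent F ![c, c'] := by
      rw [LinearIndependent.pair_iff]
      intro s t hst
      have h1 := congrFun hst z₀
      simp only [Pi.add_apply, Pi.smul_apply, smul_eq_mul, hz₀, mul_zero, add_zero,
        Pi.zero_apply] at h1
      have hs : s = 0 := by
        rcases mul_eq_zero.mp h1 with h | h
        · exact h
        · exact absurd h hcz₀
      refine ⟨hs, ?_⟩
      subst hs
      simp only [zero_smul, zero_add] at hst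
      by_contra ht
      exact hc'0 (by
        funext w
        have := congrFun hst w
        simp only [Pi.smul_apply, smul_eq_mul, Pi.zero_apply] at this
        rcases mul_eq_zero.mp this with h | h
        · exact absurd h ht
        · exact h)
    have h2 := le_finrank_of_li C ![c, c'] (by
      intro i
      fin_cases i <;> simpa using (by first | exact hcC | exact hc'C)) hli
    omega
  · -- support is a proper subset: there is a run start
    have hex_t : ∃ z ∈ T, z ∉ S := by
      by_contra hno
      push_neg at hno
      have hcl : ∀ z : ZMod n, c (z + 1) ≠ 0 → c z ≠ 0 := fun z h =>
        (hSdef z).mp (hno z ((hTdef z).mpr (Or.inr h)))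
      obtain ⟨z₀, hz₀S⟩ := Finset.card_pos.mp (by omega : 0 < S.card)
      have hz₀ : c z₀ ≠ 0 := (hSdef _).mp hz₀S
      have hall : ∀ k : ℕ, c (z₀ - (k : ZMod n)) ≠ 0 := by
        intro k
        induction k with
        | zero => simpa using hz₀
        | succ k ih =>
          apply hcl
          have heq : z₀ - ((k + 1 : ℕ) : ZMod n) + 1 = z₀ - (k : ZMod n) := by
            push_cast; ring
          rwa [heq]
      apply hSu
      apply Finset.eq_univ_of_forall
      intro z
      rw [hSdef]
      have := hall ((z₀ - z).val)
      rwa [ZMod.natCast_rightInverse (z₀ - z), sub_sub_cancel] at this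
    obtain ⟨t₀, ht₀T, ht₀S⟩ := hex_t
    have hsd : (T \ S).card = T.card - S.card := Finset.card_sdiff_of_subset hST
    have h1 : 1 ≤ (T \ S).card :=
      Finset.card_pos.mpr ⟨t₀, Finset.mem_sdiff.mpr ⟨ht₀T, ht₀S⟩⟩
    have hSdH : S.card = dH := by omega
    have hsd1 : (T \ S).card = 1 := by omega
    obtain ⟨i₀, hi₀⟩ := Finset.card_eq_one.mp hsd1
    set b := i₀ + 1 with hb
    have hi₀mem : i₀ ∈ T \ S := hi₀ ▸ Finset.mem_singleton_self i₀
    have hci₀ : c i₀ = 0 := by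
      have := (Finset.mem_sdiff.mp hi₀mem).2
      rw [hSdef] at this
      exact not_not.mp this
    have hcb : c b ≠ 0 := by
      rcases (hTdef i₀).mp (Finset.mem_sdiff.mp hi₀mem).1 with h | h
      · exact absurd hci₀ h
      · exact h
    have huniq : ∀ z : ZMod n, c z ≠ 0 → c (z - 1) = 0 → z = b := by
      intro z hz hz1
      have hzT : z - 1 ∈ T := (hTdef _).mpr (Or.inr (by rwa [sub_add_cancel]))
      have hzS : z - 1 ∉ S := by rw [hSdef]; exact not_not.mpr hz1
      have h2 : z - 1 = i₀ := by
        have h3 := Finset.mem_sdiff.mpr ⟨hzT, hzS⟩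
        rw [hi₀] at h3
        exact Finset.mem_singleton.mp h3
      rw [hb, ← h2, sub_add_cancel]
    set J := (Finset.range n).filter (fun t : ℕ => c (b + (t : ZMod n)) ≠ 0) with hJdef
    have hJdc : ∀ t, t + 1 ∈ J → t ∈ J := by
      intro t ht
      simp only [hJdef, Finset.mem_filter, Finset.mem_range] at ht ⊢
      refine ⟨by omega, ?_⟩
      intro hzero
      have heq : b + ((t + 1 : ℕ) : ZMod n) = b := by
        apply huniq _ ht.2
        have h4 : b + ((t + 1 : ℕ) : ZMod n) - 1 = b + (t : ZMod n) := by push_cast; ring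
        rw [h4]
        exact hzero
      have h5 : ((t + 1 : ℕ) : ZMod n) = 0 := by
        have := heq
        rwa [add_eq_left] at this
      have hdvd := (ZMod.natCast_eq_zero_iff _ _).mp h5
      have := Nat.le_of_dvd (by omega) hdvd
      omega
    have hJcard : J.card = dH := by
      rw [← hSdH]
      refine Finset.card_bij (fun t _ => b + (t : ZMod n)) ?_ ?_ ?_
      · intro t ht
        simp only [hJdef, Finset.mem_filter, Finset.mem_range] at ht
        exact (hSdef _).mpr ht.2
      · intro a ha a' ha' h
        simp only [hJdef, Finset.mem_filter, Finset.mem_range] at ha ha'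
        exact castInj hn ha.1 ha'.1 (add_left_cancel h)
      · intro s hs
        have hkey : b + (((s - b).val : ℕ) : ZMod n) = s := by
          rw [ZMod.natCast_rightInverse (s - b)]; ring
        refine ⟨(s - b).val, ?_, hkey⟩
        simp only [hJdef, Finset.mem_filter, Finset.mem_range]
        refine ⟨ZMod.val_lt _, ?_⟩
        rw [hkey]
        exact (hSdef _).mp hs
    have hJr : J = Finset.range dH := downclosed_eq_range J hJdc hJcard
    have hsupp : ∀ z, c z ≠ 0 ↔ ∃ t, t < dH ∧ z = b + (t : ZMod n) := by
      intro z
      constructor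
      · intro hz
        have hkey : b + (((z - b).val : ℕ) : ZMod n) = z := by
          rw [ZMod.natCast_rightInverse (z - b)]; ring
        refine ⟨(z - b).val, ?_, hkey.symm⟩
        have hmem : (z - b).val ∈ J := by
          simp only [hJdef, Finset.mem_filter, Finset.mem_range]
          exact ⟨ZMod.val_lt _, by rw [hkey]; exact hz⟩
        rw [hJr, Finset.mem_range] at hmem
        exact hmem
      · rintro ⟨t, ht, rfl⟩
        have hmem : t ∈ J := by rw [hJr, Finset.mem_range]; exact ht
        simp only [hJdef, Finset.mem_filter] at hmem
        exact hmem.2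
    have := dim_ge hη C hshift (by omega : 0 < dH) hdHn c hcC b hsupp
    omega
end
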